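/- arXiv:2408.17087 — 2 statements merged into one kernel-verified Lean document; each statement's English description precedes it below -/
import Mathlib

section
/- Let X follow the elliptical distribution E(μ,Σ,g), set ξ₁ := (X-μ)ᵀΣ^{-1}(X-μ), and let K : ℝ → [0,∞) be measurable. Then for any ξ > 0, h > 0 and a > 0, E[K((ψ_a(ξ) - ψ_a(ξ₁))/h)] = (π^{d/2}·h/Γ(d/2)) · ∫_{-ψ_a(ξ)/h}^{∞} K(-w) · g(Ψ_a(ψ_a(ξ) + w·h)) · Ψ_a(ψ_a(ξ) + w·h)^{(d-2)/2} / ψ_a'(Ψ_a(ψ_a(ξ) + w·h)) dw. -/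
/-!
Substituting `x = Σ^{1/2} y + μ` turns the elliptical density into the spherical density
`g(‖y‖²)`, the Jacobian `√|Σ|` cancelling `|Σ|^{-1/2}`; polar coordinates followed by `t = r²` then
show that `ξ₁` has density `π^{d/2} / Γ(d/2) · t^{d/2-1} g(t)` on `(0, ∞)`. The claim is the
one-dimensional substitution `t = Ψ_a(ψ_a(ξ) + w h)` in this integral: `ψ_a` and `Ψ_a` are mutually
inverse on `(0, ∞)`, so the inverse function rule gives the Jacobian `h / ψ_a'(Ψ_a(ψ_a(ξ) + w h))`.
Each change of variables is an identity of Bochner integrals that holds without integrability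
assumptions, both sides being `0` together when the integrand is not integrable.
-/

open Real Filter MeasureTheory Matrix

/-- The transformation `ψ_a(ξ) = -a + (a^{d/2} + ξ^{d/2})^{2/d}`. -/
noncomputable def psi (d : ℕ) (a : ℝ) (ξ : ℝ) : ℝ :=
  -a + (a ^ ((d : ℝ) / 2) + ξ ^ ((d : ℝ) / 2)) ^ (2 / (d : ℝ))

/-- The inverse transformation `Ψ_a(t) = ((t+a)^{d/2} - a^{d/2})^{2/d}`. -/
noncomputable def Psi (d : ℕ) (a : ℝ) (t : ℝ) : ℝ :=
  ((t + a) ^ ((d : ℝ) / 2) - a ^ ((d : ℝ) / 2)) ^ (2 / (d : ℝ))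

/-- The quadratic form `(x-μ)ᵀ Σ⁻¹ (x-μ)`. -/
noncomputable def quadForm {d : ℕ} (μv : Fin d → ℝ) (S : Matrix (Fin d) (Fin d) ℝ)
    (x : Fin d → ℝ) : ℝ :=
  (x - μv) ⬝ᵥ (S⁻¹ *ᵥ (x - μv))

/-- The elliptical density `f(x) = |Σ|^{-1/2} g((x-μ)ᵀ Σ⁻¹ (x-μ))`. -/
noncomputable def ellDensity {d : ℕ} (g : ℝ → ℝ) (μv : Fin d → ℝ)
    (S : Matrix (Fin d) (Fin d) ℝ) (x : Fin d → ℝ) : ℝ :=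
  |S.det| ^ (-(1 : ℝ) / 2) * g (quadForm μv S x)

section Transformation

variable {d : ℕ} {a : ℝ}

lemma two_div_natCast_eq_inv : (2 : ℝ) / d = ((d : ℝ) / 2)⁻¹ := (inv_div _ _).symm

lemma psi_pos (hd : 0 < d) (ha : 0 ≤ a) {s : ℝ} (hs : 0 < s) : 0 < psi d a s := by
  have : a < (a ^ ((d : ℝ) / 2) + s ^ ((d : ℝ) / 2)) ^ (2 / (d : ℝ)) :=
    calc a = (a ^ ((d : ℝ) / 2)) ^ (2 / (d : ℝ)) := by
          rw [two_div_natCast_eq_inv, rpow_rpow_inv ha (by positivity)]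
      _ < _ := by gcongr; exact lt_add_of_pos_right _ (rpow_pos_of_pos hs _)
  rw [psi]; linarith

lemma Psi_pos (hd : 0 < d) (ha : 0 ≤ a) {t : ℝ} (ht : 0 < t) : 0 < Psi d a t := by
  have : a ^ ((d : ℝ) / 2) < (t + a) ^ ((d : ℝ) / 2) := by gcongr; linarith
  exact rpow_pos_of_pos (by linarith) _

lemma Psi_psi (hd : 0 < d) (ha : 0 ≤ a) {s : ℝ} (hs : 0 ≤ s) : Psi d a (psi d a s) = s := by
  rw [psi, Psi, add_comm (-a), neg_add_cancel_right, two_div_natCast_eq_inv,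
    rpow_inv_rpow (by positivity) (by positivity), add_sub_cancel_left,
    rpow_rpow_inv hs (by positivity)]

lemma psi_Psi (hd : 0 < d) (ha : 0 ≤ a) {t : ℝ} (ht : 0 ≤ t) : psi d a (Psi d a t) = t := by
  have : a ^ ((d : ℝ) / 2) ≤ (t + a) ^ ((d : ℝ) / 2) := by gcongr; linarith
  rw [psi, Psi, two_div_natCast_eq_inv, rpow_inv_rpow (by linarith) (by positivity),
    add_sub_cancel, rpow_rpow_inv (by linarith) (by positivity)]
  ring

lemma bijOn_Psi (hd : 0 < d) (ha : 0 ≤ a) : Set.BijOn (Psi d a) (Set.Ioi 0) (Set.Ioi 0) :=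
  Set.InvOn.bijOn ⟨fun _ ht => psi_Psi hd ha (le_of_lt ht), fun _ hs => Psi_psi hd ha (le_of_lt hs)⟩
    (fun _ ht => Psi_pos hd ha ht) (fun _ hs => psi_pos hd ha hs)

lemma measurable_psi : Measurable (psi d a) := by
  unfold psi
  fun_prop

lemma continuous_Psi (hd : 0 < d) : Continuous (Psi d a) := by
  unfold Psi
  fun_prop (disch := positivity)

lemma hasDerivAt_psi (hd : 0 < d) (ha : 0 ≤ a) {s : ℝ} (hs : 0 < s) :
    HasDerivAt (psi d a)
      (s ^ ((d : ℝ) / 2 - 1) * (a ^ ((d : ℝ) / 2) + s ^ ((d : ℝ) / 2)) ^ (2 / (d : ℝ) - 1)) s := by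
  have hin := (hasDerivAt_rpow_const (p := (d : ℝ) / 2) (Or.inl hs.ne')).const_add
    (a ^ ((d : ℝ) / 2))
  have hout := hasDerivAt_rpow_const (x := a ^ ((d : ℝ) / 2) + s ^ ((d : ℝ) / 2))
    (p := 2 / (d : ℝ)) (Or.inl (by positivity))
  refine ((hout.comp s hin).const_add (-a)).congr_deriv ?_
  field_simp

lemma deriv_psi_pos (hd : 0 < d) (ha : 0 ≤ a) {s : ℝ} (hs : 0 < s) : 0 < deriv (psi d a) s := by
  rw [(hasDerivAt_psi hd ha hs).deriv]
  positivity

lemma hasDerivAt_Psi (hd : 0 < d) (ha : 0 ≤ a) {t : ℝ} (ht : 0 < t) :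
    HasDerivAt (Psi d a) (deriv (psi d a) (Psi d a t))⁻¹ t := by
  have hs := Psi_pos hd ha ht
  refine HasDerivAt.of_local_left_inverse (continuous_Psi hd).continuousAt
    (hasDerivAt_psi hd ha hs).differentiableAt.hasDerivAt (deriv_psi_pos hd ha hs).ne' ?_
  filter_upwards [Ioi_mem_nhds ht] with y hy using psi_Psi hd ha (le_of_lt hy)

end Transformation

section Substitution

variable {E : Type*} [NormedAddCommGroup E] [NormedSpace ℝ E]

lemma integral_comp_add_mul_Ioi (F : ℝ → E) (c : ℝ) {h : ℝ} (hh : 0 < h) :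
    ∫ w in Set.Ioi (-c / h), F (c + w * h) = h⁻¹ • ∫ s in Set.Ioi 0, F s := by
  have htranslate : ∫ x in Set.Ioi (-c), F (c + x) = ∫ s in Set.Ioi 0, F s := by
    simpa [Set.preimage_const_add_Ioi] using
      (measurePreserving_add_left volume c).setIntegral_preimage_emb
        (measurableEmbedding_addLeft c) F (Set.Ioi 0)
  rw [integral_comp_mul_right_Ioi (fun x => F (c + x)) _ hh, div_mul_cancel₀ _ hh.ne',
    htranslate]

variable {d : ℕ} {a : ℝ}

lemma integral_Ioi_eq_integral_comp_Psi (hd : 0 < d) (ha : 0 ≤ a) (f : ℝ → E) :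
    ∫ t in Set.Ioi 0, f t =
      ∫ s in Set.Ioi 0, (deriv (psi d a) (Psi d a s))⁻¹ • f (Psi d a s) := by
  have := integral_image_eq_integral_abs_deriv_smul measurableSet_Ioi
    (fun s hs => (hasDerivAt_Psi hd ha hs).hasDerivWithinAt) (bijOn_Psi hd ha).injOn f
  rw [(bijOn_Psi hd ha).image_eq] at this
  rw [this]
  refine setIntegral_congr_fun measurableSet_Ioi fun s hs => ?_
  rw [abs_of_pos (inv_pos.mpr (deriv_psi_pos hd ha (Psi_pos hd ha hs)))]

lemma integral_Ioi_eq_mul_integral_comp_Psi_add_mul (hd : 0 < d) (ha : 0 ≤ a) (f : ℝ → E)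
    (c : ℝ) {h : ℝ} (hh : 0 < h) :
    ∫ t in Set.Ioi 0, f t = h • ∫ w in Set.Ioi (-c / h),
      (deriv (psi d a) (Psi d a (c + w * h)))⁻¹ • f (Psi d a (c + w * h)) := by
  rw [integral_comp_add_mul_Ioi (fun s => (deriv (psi d a) (Psi d a s))⁻¹ • f (Psi d a s)) c hh,
    smul_inv_smul₀ hh.ne', integral_Ioi_eq_integral_comp_Psi hd ha]

end Substitution

section Radial

variable {E : Type*} [NormedAddCommGroup E] [NormedSpace ℝ E]
variable {ι : Type*} [Fintype ι]

lemma integral_comp_dotProduct_self_eq_euclidean (F : ℝ → E) :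
    ∫ y : ι → ℝ, F (y ⬝ᵥ y) = ∫ z : EuclideanSpace ℝ ι, F (‖z‖ ^ 2) := by
  rw [← (EuclideanSpace.volume_preserving_symm_measurableEquiv_toLp ι).integral_comp']
  congr with z
  rw [← real_inner_self_eq_norm_sq, EuclideanSpace.inner_eq_star_dotProduct]
  simp

lemma EuclideanSpace.volume_real_ball_zero_one [Nonempty ι] :
    (volume : Measure (EuclideanSpace ℝ ι)).real (Metric.ball 0 1) =
      π ^ ((Fintype.card ι : ℝ) / 2) / Gamma ((Fintype.card ι : ℝ) / 2 + 1) := by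
  rw [measureReal_def, EuclideanSpace.volume_ball, ENNReal.ofReal_one, one_pow, one_mul,
    ENNReal.toReal_ofReal (by positivity), sqrt_eq_rpow, ← rpow_mul_natCast pi_pos.le]
  ring_nf

lemma integral_comp_dotProduct_self [Nonempty ι] (F : ℝ → E) :
    ∫ y : ι → ℝ, F (y ⬝ᵥ y) =
      (π ^ ((Fintype.card ι : ℝ) / 2) / Gamma ((Fintype.card ι : ℝ) / 2)) •
        ∫ t in Set.Ioi 0, t ^ ((Fintype.card ι : ℝ) / 2 - 1) • F t := by
  have hpolar := integral_fun_norm_addHaar (volume : Measure (EuclideanSpace ℝ ι))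
    (fun r => F (r ^ 2))
  rw [finrank_euclideanSpace, EuclideanSpace.volume_real_ball_zero_one] at hpolar
  set n := Fintype.card ι
  have hn : 0 < n := Fintype.card_pos
  have hsq := integral_comp_rpow_Ioi_of_pos (g := fun t => t ^ ((n : ℝ) / 2 - 1) • F t)
    (p := 2) two_pos
  have hpt : ∀ x ∈ Set.Ioi (0 : ℝ),
      (2 * x ^ ((2 : ℝ) - 1)) • (x ^ (2 : ℝ)) ^ ((n : ℝ) / 2 - 1) • F (x ^ (2 : ℝ)) =
        (2 : ℝ) • x ^ (n - 1) • F (x ^ 2) := by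
    intro x hx
    have hpow : x ^ ((2 : ℝ) - 1) * (x ^ (2 : ℝ)) ^ ((n : ℝ) / 2 - 1) = x ^ (n - 1) := by
      rw [← rpow_mul (le_of_lt hx), ← rpow_add hx, ← rpow_natCast, Nat.cast_sub hn]
      congr 1
      ring
    rw [smul_smul, smul_smul, mul_assoc, hpow, rpow_two]
  rw [integral_comp_dotProduct_self_eq_euclidean, hpolar, ← hsq,
    setIntegral_congr_fun measurableSet_Ioi hpt, integral_smul, Gamma_add_one (by positivity),
    ← Nat.cast_smul_eq_nsmul ℝ, smul_smul, smul_smul]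
  congr 1
  field_simp

end Radial

section LinearChange

variable {E : Type*} [NormedAddCommGroup E] [NormedSpace ℝ E]

lemma integral_comp_mulVec_add {ι : Type*} [Fintype ι] [DecidableEq ι] {T : Matrix ι ι ℝ}
    (hT : T.det ≠ 0) (v : ι → ℝ) (f : (ι → ℝ) → E) :
    ∫ y, f (T *ᵥ y + v) = |T.det|⁻¹ • ∫ x, f x := by
  have hinj : Function.Injective (toLin' T) :=
    mulVec_injective_iff_isUnit.mpr ((isUnit_iff_isUnit_det T).mpr hT.isUnit)
  have hemb : MeasurableEmbedding (toLin' T) :=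
    (LinearMap.isClosedEmbedding_of_injective (LinearMap.ker_eq_bot.mpr hinj)).measurableEmbedding
  calc ∫ y, f (T *ᵥ y + v) = ∫ x, f (x + v) ∂(Measure.map (toLin' T) volume) :=
        (hemb.integral_map (fun x => f (x + v))).symm
    _ = |T.det|⁻¹ • ∫ x, f x := by
      rw [map_matrix_volume_pi_eq_smul_volume_pi hT, integral_smul_measure,
        integral_add_right_eq_self, ENNReal.toReal_ofReal (abs_nonneg _), abs_inv]

variable {d : ℕ} {μv : Fin d → ℝ} {S : Matrix (Fin d) (Fin d) ℝ}

lemma quadForm_mulVec_add {T : Matrix (Fin d) (Fin d) ℝ} (hT : IsUnit T.det) (hTS : T * Tᵀ = S)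
    (y : Fin d → ℝ) : quadForm μv S (T *ᵥ y + μv) = y ⬝ᵥ y := by
  subst hTS
  have hTt : IsUnit Tᵀ.det := by rwa [det_transpose]
  rw [quadForm, add_sub_cancel_right, Matrix.mul_inv_rev, ← mulVec_mulVec, mulVec_mulVec y T⁻¹ T,
    nonsing_inv_mul _ hT, one_mulVec, dotProduct_mulVec, ← vecMul_transpose, vecMul_vecMul,
    mul_nonsing_inv _ hTt, vecMul_one]

open scoped MatrixOrder in
lemma integral_comp_quadForm (hS : S.PosDef) (F : ℝ → E) :
    ∫ x, F (quadForm μv S x) = √S.det • ∫ y : Fin d → ℝ, F (y ⬝ᵥ y) := by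
  set T := CFC.sqrt S
  have hTsymm : Tᵀ = T := by
    simpa [IsHermitian, conjTranspose_eq_transpose_of_trivial] using
      (CFC.sqrt_nonneg S).posSemidef.isHermitian
  have hTS : T * Tᵀ = S := by rw [hTsymm, CFC.sqrt_mul_sqrt_self S hS.posSemidef.nonneg]
  have hdet : T.det = √S.det := by simpa using hS.posSemidef.det_sqrt
  have hT : T.det ≠ 0 := hdet ▸ sqrt_ne_zero'.mpr hS.det_pos
  have := integral_comp_mulVec_add hT μv (fun x => F (quadForm μv S x))
  simp only [quadForm_mulVec_add hT.isUnit hTS] at this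
  rw [this, ← abs_of_nonneg (sqrt_nonneg S.det), ← hdet, smul_inv_smul₀ (abs_ne_zero.mpr hT)]

end LinearChange

lemma integral_withDensity_ofReal_eq_integral_smul {E : Type*} [NormedAddCommGroup E]
    [NormedSpace ℝ E] {α : Type*} [MeasurableSpace α] {μ : Measure α} {f : α → ℝ}
    (hf : Measurable f) (hf0 : ∀ x, 0 ≤ f x) (Φ : α → E) :
    ∫ x, Φ x ∂μ.withDensity (fun x => ENNReal.ofReal (f x)) = ∫ x, f x • Φ x ∂μ := by
  rw [integral_withDensity_eq_integral_toReal_smul hf.ennreal_ofReal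
    (ae_of_all _ fun _ => ENNReal.ofReal_lt_top)]
  simp_rw [ENNReal.toReal_ofReal (hf0 _)]

section Elliptical

variable {d : ℕ} {μv : Fin d → ℝ} {S : Matrix (Fin d) (Fin d) ℝ}

lemma measurable_quadForm : Measurable (quadForm μv S) := by
  unfold quadForm
  fun_prop

lemma measurable_ellDensity {g : ℝ → ℝ} (hg : Measurable g) : Measurable (ellDensity g μv S) :=
  (hg.comp measurable_quadForm).const_mul _

lemma ellDensity_nonneg {g : ℝ → ℝ} (hg0 : ∀ t, 0 ≤ g t) (x : Fin d → ℝ) :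
    0 ≤ ellDensity g μv S x :=
  mul_nonneg (rpow_nonneg (abs_nonneg _) _) (hg0 _)

lemma integral_ellDensity_smul_comp_quadForm {E : Type*} [NormedAddCommGroup E] [NormedSpace ℝ E]
    (hd : 0 < d) (hS : S.PosDef) (g : ℝ → ℝ) (F : ℝ → E) :
    ∫ x, ellDensity g μv S x • F (quadForm μv S x) =
      (π ^ ((d : ℝ) / 2) / Gamma ((d : ℝ) / 2)) •
        ∫ t in Set.Ioi 0, (t ^ ((d : ℝ) / 2 - 1) * g t) • F t := by
  have : Nonempty (Fin d) := ⟨⟨0, hd⟩⟩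
  have hnorm : |S.det| ^ (-(1 : ℝ) / 2) * √S.det = 1 := by
    rw [abs_of_pos hS.det_pos, sqrt_eq_rpow, ← rpow_add hS.det_pos]
    norm_num
  simp_rw [ellDensity, mul_smul]
  rw [integral_smul, integral_comp_quadForm hS (fun t => g t • F t),
    integral_comp_dotProduct_self (fun t => g t • F t), Fintype.card_fin, smul_smul, hnorm,
    one_smul]

end Elliptical

theorem expectation_kernel_change_of_variable_general (d : ℕ) (hd : 2 ≤ d) (a : ℝ) (ha : 0 < a)
    (g : ℝ → ℝ) (hgm : Measurable g) (hg0 : ∀ x, 0 ≤ g x)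
    (μv : Fin d → ℝ) (S : Matrix (Fin d) (Fin d) ℝ) (hS : S.PosDef)
    {Ω : Type*} [MeasurableSpace Ω] (P : Measure Ω)
    (X : Ω → (Fin d → ℝ)) (hXm : Measurable X)
    (hlaw : Measure.map X P =
      volume.withDensity (fun x => ENNReal.ofReal (ellDensity g μv S x)))
    (K : ℝ → ℝ) (hKm : Measurable K)
    (ξ h : ℝ) (hh : 0 < h) :
    ∫ ω, K ((psi d a ξ - psi d a (quadForm μv S (X ω))) / h) ∂P =
      (π ^ ((d : ℝ) / 2) * h / Real.Gamma ((d : ℝ) / 2)) *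
        ∫ w in Set.Ioi (-(psi d a ξ) / h),
          K (-w) * g (Psi d a (psi d a ξ + w * h)) *
            (Psi d a (psi d a ξ + w * h)) ^ (((d : ℝ) - 2) / 2) /
            deriv (psi d a) (Psi d a (psi d a ξ + w * h)) := by
  have hd0 : 0 < d := by omega
  set c := psi d a ξ
  have hΦ : Measurable fun x => K ((c - psi d a (quadForm μv S x)) / h) :=
    hKm.comp ((measurable_const.sub (measurable_psi.comp measurable_quadForm)).div_const h)
  rw [← integral_map hXm.aemeasurable hΦ.aestronglyMeasurable, hlaw,
    integral_withDensity_ofReal_eq_integral_smul (measurable_ellDensity hgm)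
      (ellDensity_nonneg hg0),
    integral_ellDensity_smul_comp_quadForm hd0 hS g (fun t => K ((c - psi d a t) / h)),
    integral_Ioi_eq_mul_integral_comp_Psi_add_mul hd0 ha.le _ c hh, smul_eq_mul, smul_eq_mul,
    ← mul_assoc, mul_div_right_comm]
  congr 1
  refine setIntegral_congr_fun measurableSet_Ioi fun w hw => ?_
  have hpos : 0 < c + w * h := by
    have := (div_lt_iff₀ hh).mp hw
    linarith
  rw [psi_Psi hd0 ha.le hpos.le, show (c - (c + w * h)) / h = -w by field_simp; ring,
    show ((d : ℝ) - 2) / 2 = (d : ℝ) / 2 - 1 by ring, smul_eq_mul, smul_eq_mul]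
  field_simp

/-- change of variables for the expectation of a kernel evaluated at the
transformed quadratic form of an elliptically distributed random vector. -/
theorem expectation_kernel_change_of_variable (d : ℕ) (hd : 2 ≤ d) (a : ℝ) (ha : 0 < a)
    (g : ℝ → ℝ) (hgm : Measurable g) (hg0 : ∀ x, 0 ≤ g x)
    (μv : Fin d → ℝ) (S : Matrix (Fin d) (Fin d) ℝ) (hS : S.PosDef)
    {Ω : Type*} [MeasurableSpace Ω] (P : Measure Ω) [IsProbabilityMeasure P]
    (X : Ω → (Fin d → ℝ)) (hXm : Measurable X)
    (hlaw : Measure.map X P =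
      volume.withDensity (fun x => ENNReal.ofReal (ellDensity g μv S x)))
    (K : ℝ → ℝ) (hKm : Measurable K) (hK0 : ∀ x, 0 ≤ K x)
    (ξ h : ℝ) (hξ : 0 < ξ) (hh : 0 < h) :
    ∫ ω, K ((psi d a ξ - psi d a (quadForm μv S (X ω))) / h) ∂P =
      (π ^ ((d : ℝ) / 2) * h / Real.Gamma ((d : ℝ) / 2)) *
        ∫ w in Set.Ioi (-(psi d a ξ) / h),
          K (-w) * g (Psi d a (psi d a ξ + w * h)) *
            (Psi d a (psi d a ξ + w * h)) ^ (((d : ℝ) - 2) / 2) /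
            deriv (psi d a) (Psi d a (psi d a ξ + w * h)) :=
  expectation_kernel_change_of_variable_general d hd a ha g hgm hg0 μv S hS P X hXm hlaw K hKm ξ h
    hh
end

section
/- Let s > 0 and c₃, c₄, c₅ ∈ ℝ with c := 2·c₃·s - c₄ > 0, define κ(A) := (c₃·A² + c₄·A + c₅)/(s + A)² for A > -s, and set A* := (2·c₅ - c₄·s)/(2·c₃·s - c₄). If A* > 0, then A* is the strict global minimizer of κ on (0, ∞): κ(A*) < κ(A) for every A > 0 with A ≠ A*. (This applies in particular with s = ξ^{d/2} and c₃, c₄, c₅ equal to the constants C̃3, C̃4, C̃5 of the asymptotic MSE, yielding the optimal tuning parameter a_opt = (A*)^{2/d}.) -/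
/-!
In the variable `t = 1 / (s + A)` the function `κ` is the quadratic `c₃ - c t + k t²`, where
`c = 2 c₃ s - c₄` and `k = c₃ s² - c₄ s + c₅`. The defining equation of `A*` says exactly that
`c (s + A*) = 2 k`, i.e. `A*` corresponds to the vertex `t = c / (2k)`, and it forces `k > 0`.
Completing the square gives `κ A = κ A* + k (1/(s+A) - 1/(s+A*))²`.
-/

noncomputable def kappa (s c₃ c₄ c₅ A : ℝ) : ℝ := (c₃ * A ^ 2 + c₄ * A + c₅) / (s + A) ^ 2

section

variable {s c₃ c₄ c₅ : ℝ}

theorem kappa_eq_quadratic_inv {A : ℝ} (hA : s + A ≠ 0) :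
    kappa s c₃ c₄ c₅ A =
      c₃ - (2 * c₃ * s - c₄) * (s + A)⁻¹ + (c₃ * s ^ 2 - c₄ * s + c₅) * ((s + A)⁻¹) ^ 2 := by
  unfold kappa
  field_simp
  ring

theorem kappa_eq_add_sq_of_crit {A B : ℝ} (hA : s + A ≠ 0) (hB : s + B ≠ 0)
    (hcrit : (2 * c₃ * s - c₄) * (s + B) = 2 * (c₃ * s ^ 2 - c₄ * s + c₅)) :
    kappa s c₃ c₄ c₅ A =
      kappa s c₃ c₄ c₅ B + (c₃ * s ^ 2 - c₄ * s + c₅) * ((s + A)⁻¹ - (s + B)⁻¹) ^ 2 := by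
  have hvertex : 2 * c₃ * s - c₄ = 2 * (c₃ * s ^ 2 - c₄ * s + c₅) * (s + B)⁻¹ := by
    rw [← hcrit, mul_inv_cancel_right₀ hB]
  rw [kappa_eq_quadratic_inv hA, kappa_eq_quadratic_inv hB]
  linear_combination ((s + B)⁻¹ - (s + A)⁻¹) * hvertex

theorem kappa_lt_of_crit {A B : ℝ} (hc : 0 < 2 * c₃ * s - c₄) (hA : s + A ≠ 0) (hB : 0 < s + B)
    (hcrit : (2 * c₃ * s - c₄) * (s + B) = 2 * (c₃ * s ^ 2 - c₄ * s + c₅)) (hne : A ≠ B) :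
    kappa s c₃ c₄ c₅ B < kappa s c₃ c₄ c₅ A := by
  have hk : 0 < c₃ * s ^ 2 - c₄ * s + c₅ := by nlinarith [mul_pos hc hB]
  have hinv : (s + A)⁻¹ - (s + B)⁻¹ ≠ 0 := by
    rw [sub_ne_zero, Ne, inv_inj, add_right_inj]
    exact hne
  rw [kappa_eq_add_sq_of_crit hA hB.ne' hcrit, lt_add_iff_pos_right]
  positivity

end

/-- if `2c₃s - c₄ > 0` and `A* = (2c₅ - c₄s)/(2c₃s - c₄) > 0`, then `A*` is the
strict global minimizer of `κ(A) = (c₃A² + c₄A + c₅)/(s+A)²` on `(0,∞)`. -/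
theorem kappa_strict_global_min (s : ℝ) (hs : 0 < s) (c₃ c₄ c₅ : ℝ)
    (hc : 0 < 2 * c₃ * s - c₄)
    (Astar : ℝ) (hAstar : Astar = (2 * c₅ - c₄ * s) / (2 * c₃ * s - c₄))
    (hApos : 0 < Astar) :
    ∀ A : ℝ, 0 < A → A ≠ Astar →
      (c₃ * Astar ^ 2 + c₄ * Astar + c₅) / (s + Astar) ^ 2 <
        (c₃ * A ^ 2 + c₄ * A + c₅) / (s + A) ^ 2 := by
  intro A hA hne
  have hcrit : (2 * c₃ * s - c₄) * (s + Astar) = 2 * (c₃ * s ^ 2 - c₄ * s + c₅) := by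
    rw [hAstar]
    field_simp
    ring
  exact kappa_lt_of_crit hc (by positivity) (by positivity) hcrit hne
end
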